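/- Let N ≥ 1, 1 ≤ k ≤ N, and α > 0. Then for every x ∈ P_{N,k}(ℤ), the sum over all y ∈ P_N(ℤ) of e^{-α|x−y|₁} is at most C_α^k, where C_α = (1-e^{-α})^{-1}(∏_{n=1}^∞(1-e^{-αn})^{-1})². -/

import Mathlib

open Real

/-- Number of clusters (maximal runs of consecutive integers) of a finite subset of `ℤ`,
counted via its right endpoints. -/
def numClusters (x : Finset ℤ) : ℕ := (x.filter fun i => i + 1 ∉ x).card

/-- The `ℓ¹` distance `|x − y|₁ = Σ_{i=1}^N |x_i − y_i|` between two `N`-element subsets of `ℤ`,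
using their increasing enumerations. -/
noncomputable def dOne (N : ℕ) (x y : Finset ℤ) (hx : x.card = N) (hy : y.card = N) : ℝ :=
  ∑ i : Fin N, |(((x.orderIsoOfFin hx i : ℤ) : ℝ)) - (((y.orderIsoOfFin hy i : ℤ) : ℝ))|

/-- The constant `C_α = (1-e^{-α})⁻¹ (∏_{n=1}^∞ (1-e^{-αn})^{-1})²`. -/
noncomputable def Calpha (α : ℝ) : ℝ :=
  (1 - Real.exp (-α))⁻¹ * (∏' n : ℕ, (1 - Real.exp (-α * (n + 1)))⁻¹) ^ 2

/-!
Write `y_i - x_i = b_i - a_i` with `a_i, b_i ≥ 0`, so that `|x - y|₁ = ∑ a + ∑ b` and `y` is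
determined by `(a, b)`. Along a cluster of `x` the points `y_i` increase at least as fast as the
`x_i`, so `a` is nonincreasing and `b` nondecreasing on each cluster. A sequence that is
nonincreasing on each cluster is determined by its drops `e_i ≥ 0`, and its sum is
`∑ (r_i + 1) e_i` where `r_i` is the position of `i` in its cluster; summing the geometric series
over all `e` gives `∏ (1 - q^(r_i + 1))⁻¹ ≤ (∏ₙ (1 - q^(n+1))⁻¹)^k` with `q = e^{-α}`, because a
given position occurs in at most `k` clusters. The same bound for `b` gives
`(∏ₙ (1 - q^(n+1))⁻¹)^(2k) ≤ C_α^k`.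
-/

open Finset
open scoped ENNReal

theorem ENNReal.tsum_pi_prod_eq_prod_tsum {ι : Type*} [Fintype ι] (f : ι → ℕ → ℝ≥0∞) :
    ∑' u : ι → ℕ, ∏ i, f i (u i) = ∏ i, ∑' n, f i n := by
  revert f
  refine Fintype.induction_empty_option
    (P := fun ι _ => ∀ f : ι → ℕ → ℝ≥0∞, ∑' u : ι → ℕ, ∏ i, f i (u i) = ∏ i, ∑' n, f i n)
    ?_ ?_ ?_ ι
  · intro α β _ e ih f
    let _ : Fintype α := Fintype.ofEquiv β e.symm
    rw [← (e.arrowCongr (Equiv.refl ℕ)).tsum_eq, ← e.prod_comp]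
    simpa [← e.prod_comp] using ih (fun a => f (e a))
  · intro f
    simp
  · intro α _ ih f
    rw [← (Equiv.piOptionEquivProd (β := fun _ => ℕ)).symm.tsum_eq, ENNReal.tsum_prod',
      Fintype.prod_option, ← ih, ← ENNReal.tsum_mul_right]
    simp [Fintype.prod_option, ENNReal.tsum_mul_left]

theorem ENNReal.tsum_comp_mul_le_tsum_mul_tsum {γ α β : Type*} {φ : γ → α × β}
    (hφ : Function.Injective φ) (f : α → ℝ≥0∞) (g : β → ℝ≥0∞) :
    ∑' y, f (φ y).1 * g (φ y).2 ≤ (∑' a, f a) * ∑' b, g b := by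
  refine (ENNReal.tsum_comp_le_tsum_of_injective hφ fun p => f p.1 * g p.2).trans_eq ?_
  rw [ENNReal.tsum_prod', ← ENNReal.tsum_mul_right]
  simp [ENNReal.tsum_mul_left]

theorem ENNReal.tsum_prod_pow_eq_prod_inv_one_sub {ι : Type*} [Fintype ι] (z : ι → ℝ≥0∞) :
    ∑' u : ι → ℕ, ∏ i, z i ^ u i = ∏ i, (1 - z i)⁻¹ := by
  simp [ENNReal.tsum_pi_prod_eq_prod_tsum, ENNReal.tsum_geometric]

theorem Multipliable.prod_le_tprod_of_one_le {ι : Type*} {f : ι → ℝ} (hf : Multipliable f)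
    (hf1 : ∀ i, 1 ≤ f i) (s : Finset ι) : ∏ i ∈ s, f i ≤ ∏' i, f i :=
  ge_of_tendsto hf.hasProd <| Filter.eventually_atTop.2 ⟨s, fun _t hst =>
    prod_le_prod_of_subset_of_one_le hst (fun i _ => zero_le_one.trans (hf1 i)) fun i _ _ => hf1 i⟩

theorem prod_comp_le_tprod_pow {ι κ : Type*} [Fintype ι] [DecidableEq κ] {f : κ → ℝ}
    (hf : Multipliable f) (hf1 : ∀ n, 1 ≤ f n) (g : ι → κ) {k : ℕ}
    (hg : ∀ n, #{i | g i = n} ≤ k) : ∏ i, f (g i) ≤ (∏' n, f n) ^ k := by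
  have hf0 : ∀ n, 0 ≤ f n := fun n => zero_le_one.trans (hf1 n)
  rw [prod_comp]
  calc ∏ n ∈ univ.image g, f n ^ #{i | g i = n}
      ≤ ∏ n ∈ univ.image g, f n ^ k :=
        prod_le_prod (fun n _ => pow_nonneg (hf0 n) _) fun n _ => pow_le_pow_right₀ (hf1 n) (hg n)
    _ = (∏ n ∈ univ.image g, f n) ^ k := prod_pow _ _ _
    _ ≤ (∏' n, f n) ^ k :=
        pow_le_pow_left₀ (prod_nonneg fun n _ => hf0 n) (hf.prod_le_tprod_of_one_le hf1 _) k

section EulerProduct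

noncomputable def partitionGenFun (q : ℝ) : ℝ := ∏' n : ℕ, (1 - q ^ (n + 1))⁻¹

variable {q : ℝ}

theorem one_le_inv_one_sub_pow (hq0 : 0 ≤ q) (hq1 : q < 1) (n : ℕ) :
    1 ≤ (1 - q ^ (n + 1))⁻¹ := by
  rw [one_le_inv₀ (sub_pos.2 (pow_lt_one₀ hq0 hq1 n.add_one_ne_zero))]
  linarith [pow_nonneg hq0 (n + 1)]

theorem multipliable_inv_one_sub_pow (hq0 : 0 ≤ q) (hq1 : q < 1) :
    Multipliable fun n : ℕ => (1 - q ^ (n + 1))⁻¹ := by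
  refine Real.multipliable_of_summable_log
    (fun n => zero_lt_one.trans_le (one_le_inv_one_sub_pow hq0 hq1 n)) ?_
  have : Summable fun n : ℕ => -q ^ (n + 1) := by
    simpa [pow_succ] using ((summable_geometric_of_lt_one hq0 hq1).mul_right q).neg
  simpa [Real.log_inv, sub_eq_add_neg] using (Real.summable_log_one_add_of_summable this).neg

theorem partitionGenFun_nonneg (hq0 : 0 ≤ q) (hq1 : q < 1) : 0 ≤ partitionGenFun q :=
  tprod_nonneg fun n => zero_le_one.trans (one_le_inv_one_sub_pow hq0 hq1 n)

end EulerProduct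

section Fibers

variable {ι β : Type*} [Fintype ι] [LinearOrder ι] [DecidableEq β] (c : ι → β)

def AntitoneOnFibers (a : ι → ℕ) : Prop := ∀ ⦃i j⦄, i ≤ j → c i = c j → a j ≤ a i

def fiberIndex (i : ι) : ℕ := #{j | j < i ∧ c j = c i}

/-- For `a` antitone on fibers, the drop from `i` to the next index of its fiber, or `a i` at the
last index of a fiber (the supremum of the empty set being `0`). -/
def fiberDiff (a : ι → ℕ) (i : ι) : ℕ := a i - ({j | i < j ∧ c j = c i} : Finset ι).sup a

variable {c}

theorem AntitoneOnFibers.eq_sum_fiberDiff {a : ι → ℕ} (ha : AntitoneOnFibers c a) (j : ι) :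
    a j = ∑ i ∈ {i | j ≤ i ∧ c i = c j}, fiberDiff c a i := by
  induction j using WellFoundedGT.induction with
  | _ j ih =>
  set S : Finset ι := {i | j < i ∧ c i = c j} with hS
  have hmem : ∀ {i}, i ∈ S ↔ j < i ∧ c i = c j := by simp [hS]
  have hsum : ∑ i ∈ S, fiberDiff c a i = S.sup a := by
    rcases S.eq_empty_or_nonempty with hSe | hSne
    · simp [hSe]
    · obtain ⟨hjm, hcm⟩ := hmem.1 (S.min'_mem hSne)
      have hSeq : S = ({i | S.min' hSne ≤ i ∧ c i = c (S.min' hSne)} : Finset ι) := by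
        ext i
        simp only [hmem, mem_filter, mem_univ, true_and, hcm]
        exact ⟨fun hi => ⟨S.min'_le i (hmem.2 hi), hi.2⟩,
          fun hi => ⟨hjm.trans_le hi.1, hi.2⟩⟩
      rw [hSeq, ← ih _ hjm, ← hSeq]
      refine le_antisymm (Finset.le_sup (S.min'_mem hSne)) (Finset.sup_le fun i hi => ?_)
      exact ha (S.min'_le i hi) (hcm.trans (hmem.1 hi).2.symm)
  have hsup_le : S.sup a ≤ a j :=
    Finset.sup_le fun i hi => ha (hmem.1 hi).1.le (hmem.1 hi).2.symm
  have hinsert : ({i | j ≤ i ∧ c i = c j} : Finset ι) = insert j S := by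
    ext i
    simp only [hmem, mem_filter, mem_univ, true_and, mem_insert, le_iff_eq_or_lt]
    grind
  rw [hinsert, sum_insert (by simp [hmem]), hsum, fiberDiff, ← hS]
  omega

theorem injOn_fiberDiff : Set.InjOn (fiberDiff c) {a | AntitoneOnFibers c a} :=
  fun a ha a' ha' h => funext fun j => by rw [ha.eq_sum_fiberDiff, ha'.eq_sum_fiberDiff, h]

variable (c) in
theorem card_filter_le_eq_fiberIndex_add_one (i : ι) :
    #{j | j ≤ i ∧ c j = c i} = fiberIndex c i + 1 := by
  rw [fiberIndex, ← card_insert_of_notMem (a := i) (s := {j | j < i ∧ c j = c i}) (by simp)]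
  congr 1
  ext j
  simp only [mem_filter, mem_univ, true_and, mem_insert, le_iff_eq_or_lt]
  grind

theorem AntitoneOnFibers.sum_eq_sum_fiberIndex_mul_fiberDiff {a : ι → ℕ}
    (ha : AntitoneOnFibers c a) :
    ∑ i, a i = ∑ i, (fiberIndex c i + 1) * fiberDiff c a i := by
  simp_rw [← card_filter_le_eq_fiberIndex_add_one, ← smul_eq_mul, ← sum_const]
  conv_lhs => rw [Fintype.sum_congr _ _ ha.eq_sum_fiberDiff]
  simp_rw [sum_filter]
  rw [sum_comm]
  exact sum_congr rfl fun i _ => sum_congr rfl fun j _ => by simp_rw [eq_comm (a := c i)]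

theorem fiberIndex_lt_fiberIndex {i i' : ι} (h : i < i') (hc : c i = c i') :
    fiberIndex c i < fiberIndex c i' := by
  refine card_lt_card ((ssubset_iff_of_subset fun j hj => ?_).2 ⟨i, ?_, ?_⟩)
  · simp only [mem_filter, mem_univ, true_and] at hj ⊢
    exact ⟨hj.1.trans h, hj.2.trans hc⟩
  · simp [h, hc]
  · simp

variable (c) in
theorem card_filter_fiberIndex_eq_le (n : ℕ) : #{i | fiberIndex c i = n} ≤ #(univ.image c) := by
  refine card_le_card_of_injOn c (fun i _ => mem_image_of_mem c (mem_univ i))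
    fun i hi i' hi' hc => ?_
  simp only [coe_filter, mem_univ, true_and, Set.mem_ofPred_eq] at hi hi'
  rcases lt_trichotomy i i' with h | h | h
  · exact absurd (hi.trans hi'.symm) (fiberIndex_lt_fiberIndex h hc).ne
  · exact h
  · exact absurd (hi'.trans hi.symm) (fiberIndex_lt_fiberIndex h hc.symm).ne

variable (c) in
theorem tsum_antitoneOnFibers_pow_sum_le (Q : ℝ≥0∞) :
    ∑' a : {a : ι → ℕ // AntitoneOnFibers c a}, Q ^ ∑ i, a.1 i
      ≤ ∏ i, (1 - Q ^ (fiberIndex c i + 1))⁻¹ :=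
  calc ∑' a : {a : ι → ℕ // AntitoneOnFibers c a}, Q ^ ∑ i, a.1 i
      = ∑' a : {a : ι → ℕ // AntitoneOnFibers c a},
          ∏ i, (Q ^ (fiberIndex c i + 1)) ^ fiberDiff c a.1 i := by
        refine tsum_congr fun a => ?_
        simp_rw [a.2.sum_eq_sum_fiberIndex_mul_fiberDiff, ← prod_pow_eq_pow_sum, pow_mul]
    _ ≤ ∑' e : ι → ℕ, ∏ i, (Q ^ (fiberIndex c i + 1)) ^ e i :=
        ENNReal.tsum_comp_le_tsum_of_injective injOn_fiberDiff.injective _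
    _ = ∏ i, (1 - Q ^ (fiberIndex c i + 1))⁻¹ := ENNReal.tsum_prod_pow_eq_prod_inv_one_sub _

variable (c) in
theorem tsum_antitoneOnFibers_ofReal_pow_sum_le {q : ℝ} (hq0 : 0 ≤ q) (hq1 : q < 1) {k : ℕ}
    (hk : #(univ.image c) ≤ k) :
    ∑' a : {a : ι → ℕ // AntitoneOnFibers c a}, ENNReal.ofReal q ^ ∑ i, a.1 i
      ≤ ENNReal.ofReal (partitionGenFun q ^ k) := by
  have hpos : ∀ i, 0 < 1 - q ^ (fiberIndex c i + 1) := fun i =>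
    sub_pos.2 (pow_lt_one₀ hq0 hq1 (Nat.add_one_ne_zero _))
  calc ∑' a : {a : ι → ℕ // AntitoneOnFibers c a}, ENNReal.ofReal q ^ ∑ i, a.1 i
      ≤ ∏ i, (1 - ENNReal.ofReal q ^ (fiberIndex c i + 1))⁻¹ :=
        tsum_antitoneOnFibers_pow_sum_le c _
    _ = ENNReal.ofReal (∏ i, (1 - q ^ (fiberIndex c i + 1))⁻¹) := by
      rw [ENNReal.ofReal_prod_of_nonneg fun i _ => (inv_pos.2 (hpos i)).le]
      refine prod_congr rfl fun i _ => ?_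
      rw [ENNReal.ofReal_inv_of_pos (hpos i), ENNReal.ofReal_sub _ (pow_nonneg hq0 _),
        ENNReal.ofReal_one, ENNReal.ofReal_pow hq0]
    _ ≤ ENNReal.ofReal (partitionGenFun q ^ k) :=
      ENNReal.ofReal_le_ofReal <| prod_comp_le_tprod_pow (multipliable_inv_one_sub_pow hq0 hq1)
        (one_le_inv_one_sub_pow hq0 hq1) (fiberIndex c) fun n =>
          (card_filter_fiberIndex_eq_le c n).trans hk

end Fibers

theorem StrictMono.val_sub_le_sub {n : ℕ} {f : Fin n → ℤ} (hf : StrictMono f) {i j : Fin n}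
    (hij : i ≤ j) : (j : ℤ) - i ≤ f j - f i := by
  have := card_le_card_of_injOn f (s := Icc i j) (t := Icc (f i) (f j))
    (fun l hl => by
      simp only [coe_Icc, Set.mem_Icc] at hl ⊢
      exact ⟨hf.monotone hl.1, hf.monotone hl.2⟩) hf.injective.injOn
  rw [Fin.card_Icc, Int.card_Icc] at this
  have := Fin.le_def.1 hij
  omega

section Configurations

variable {N : ℕ} {x y : Finset ℤ}

/-- For `i ≤ j`, `x_j - x_i ≥ j - i` with equality iff `x_i, …, x_j` are consecutive integers,
so the fibers of this label are exactly the clusters of `x`. -/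
def clusterLabel (hx : x.card = N) (i : Fin N) : ℤ := x.orderEmbOfFin hx i - i

def displacement (hx : x.card = N) (hy : y.card = N) (i : Fin N) : ℤ :=
  y.orderEmbOfFin hy i - x.orderEmbOfFin hx i

theorem monotone_clusterLabel (hx : x.card = N) : Monotone (clusterLabel hx) := fun i j hij => by
  have := (x.orderEmbOfFin hx).strictMono.val_sub_le_sub hij
  simp only [clusterLabel]
  omega

theorem card_image_clusterLabel_le (hx : x.card = N) :
    #(univ.image (clusterLabel hx)) ≤ numClusters x := by
  set X := x.orderEmbOfFin hx with hX
  have hcard : #({i | X i + 1 ∉ x} : Finset (Fin N)) = numClusters x := by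
    rw [numClusters, ← congrArg (filter (· + 1 ∉ x)) (x.map_orderEmbOfFin_univ hx), filter_map,
      card_map]
    rfl
  rw [← hcard]
  refine card_le_card_of_surjOn (clusterLabel hx) fun v hv => ?_
  obtain ⟨i, -, rfl⟩ := mem_image.1 hv
  set F : Finset (Fin N) := {j | clusterLabel hx j = clusterLabel hx i}
  have hF : F.Nonempty := ⟨i, by simp [F]⟩
  have hmax : clusterLabel hx (F.max' hF) = clusterLabel hx i := (mem_filter.1 (F.max'_mem hF)).2
  refine ⟨F.max' hF, ?_, hmax⟩
  simp only [coe_filter, mem_univ, true_and, Set.mem_ofPred_eq]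
  intro hmem
  obtain ⟨j', hj'⟩ : X (F.max' hF) + 1 ∈ Set.range X := by rwa [x.range_orderEmbOfFin hx]
  have hlt : F.max' hF < j' := X.strictMono.lt_iff_lt.1 (by omega)
  have hlabel : clusterLabel hx j' = clusterLabel hx i := by
    refine hmax ▸ le_antisymm ?_ (monotone_clusterLabel hx hlt.le)
    have := Fin.lt_def.1 hlt
    simp only [clusterLabel, ← hX]
    omega
  exact absurd (F.le_max' j' (by simp [F, hlabel])) (not_le.2 hlt)

theorem displacement_le_displacement (hx : x.card = N) (hy : y.card = N) {i j : Fin N}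
    (hij : i ≤ j) (hc : clusterLabel hx i = clusterLabel hx j) :
    displacement hx hy i ≤ displacement hx hy j := by
  have := (y.orderEmbOfFin hy).strictMono.val_sub_le_sub hij
  simp only [clusterLabel, displacement] at hc ⊢
  omega

theorem displacement_injective (hx : x.card = N) :
    Function.Injective fun y : {y : Finset ℤ // y.card = N} => displacement hx y.2 := by
  rintro ⟨y, hy⟩ ⟨y', hy'⟩ h
  have hY : y.orderEmbOfFin hy = y'.orderEmbOfFin hy' := by
    ext i
    have := congrFun h i
    simp only [displacement] at this
    omega
  rw [Subtype.mk.injEq, ← y.map_orderEmbOfFin_univ hy, ← y'.map_orderEmbOfFin_univ hy', hY]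

theorem dOne_eq_sum_toNat (hx : x.card = N) (hy : y.card = N) :
    dOne N x y hx hy =
      ((∑ i, (-displacement hx hy i).toNat + ∑ i, (displacement hx hy i).toNat : ℕ) : ℝ) := by
  rw [dOne, ← sum_add_distrib, Nat.cast_sum]
  refine sum_congr rfl fun i _ => ?_
  have : |x.orderEmbOfFin hx i - y.orderEmbOfFin hy i| =
      ((-displacement hx hy i).toNat + (displacement hx hy i).toNat : ℕ) := by
    rw [abs_eq_max_neg, displacement]
    omega
  simp only [coe_orderIsoOfFin_apply]
  exact_mod_cast this

/-- The negative and positive parts of the displacement; the positive part is monotone on clusters,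
so it is antitone on the fibers for the reversed order. -/
def splitDisplacement (hx : x.card = N) (y : {y : Finset ℤ // y.card = N}) :
    {a : Fin N → ℕ // AntitoneOnFibers (clusterLabel hx) a} ×
      {b : (Fin N)ᵒᵈ → ℕ // AntitoneOnFibers (clusterLabel hx ∘ OrderDual.ofDual) b} :=
  (⟨fun i => (-displacement hx y.2 i).toNat, fun _ _ hij hc =>
      Int.toNat_le_toNat (neg_le_neg (displacement_le_displacement hx y.2 hij hc))⟩,
    ⟨fun i => (displacement hx y.2 (OrderDual.ofDual i)).toNat, fun _ _ hij hc =>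
      Int.toNat_le_toNat (displacement_le_displacement hx y.2 hij hc.symm)⟩)

theorem splitDisplacement_injective (hx : x.card = N) :
    Function.Injective (splitDisplacement hx) := fun y y' h => by
  refine displacement_injective hx (funext fun i => ?_)
  have ha := congrFun (congrArg (fun p => p.1.1) h) i
  have hb := congrFun (congrArg (fun p => p.2.1) h) (OrderDual.toDual i)
  simp only [splitDisplacement, OrderDual.ofDual_toDual] at ha hb
  show displacement hx y.2 i = displacement hx y'.2 i
  omega

theorem ofReal_exp_neg_mul_dOne (hx : x.card = N) (α : ℝ) (y : {y : Finset ℤ // y.card = N}) :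
    ENNReal.ofReal (Real.exp (-α * dOne N x y.1 hx y.2)) =
      ENNReal.ofReal (Real.exp (-α)) ^ (∑ i, (splitDisplacement hx y).1.1 i) *
        ENNReal.ofReal (Real.exp (-α)) ^ ∑ i, (splitDisplacement hx y).2.1 i := by
  rw [dOne_eq_sum_toNat, mul_comm, Real.exp_nat_mul, ENNReal.ofReal_pow (Real.exp_pos _).le,
    pow_add]
  rfl

end Configurations

theorem tsum_ofReal_exp_neg_mul_dOne_le {N k : ℕ} {α : ℝ} (hα : 0 < α) {x : Finset ℤ}
    (hx : x.card = N) (hxk : numClusters x ≤ k) :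
    ∑' y : {y : Finset ℤ // y.card = N}, ENNReal.ofReal (Real.exp (-α * dOne N x y.1 hx y.2))
      ≤ ENNReal.ofReal
          (partitionGenFun (Real.exp (-α)) ^ k * partitionGenFun (Real.exp (-α)) ^ k) := by
  set q := Real.exp (-α)
  have hq0 : 0 ≤ q := (Real.exp_pos _).le
  have hq1 : q < 1 := Real.exp_lt_one_iff.2 (neg_lt_zero.2 hα)
  have hk : #(univ.image (clusterLabel hx)) ≤ k := (card_image_clusterLabel_le hx).trans hxk
  rw [ENNReal.ofReal_mul (pow_nonneg (partitionGenFun_nonneg hq0 hq1) k)]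
  calc _ = ∑' y, ENNReal.ofReal q ^ (∑ i, (splitDisplacement hx y).1.1 i) *
          ENNReal.ofReal q ^ ∑ i, (splitDisplacement hx y).2.1 i :=
        tsum_congr (ofReal_exp_neg_mul_dOne hx α)
    _ ≤ (∑' a : {a // AntitoneOnFibers (clusterLabel hx) a}, ENNReal.ofReal q ^ ∑ i, a.1 i) *
          ∑' b : {b // AntitoneOnFibers (clusterLabel hx ∘ OrderDual.ofDual) b},
            ENNReal.ofReal q ^ ∑ i, b.1 i :=
        ENNReal.tsum_comp_mul_le_tsum_mul_tsum (splitDisplacement_injective hx) _ _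
    _ ≤ _ := mul_le_mul' (tsum_antitoneOnFibers_ofReal_pow_sum_le _ hq0 hq1 hk)
        (tsum_antitoneOnFibers_ofReal_pow_sum_le _ hq0 hq1 hk)

theorem pow_mul_pow_le_Calpha_pow {α : ℝ} (hα : 0 < α) (k : ℕ) :
    partitionGenFun (Real.exp (-α)) ^ k * partitionGenFun (Real.exp (-α)) ^ k ≤ Calpha α ^ k := by
  have hq1 : 1 ≤ (1 - Real.exp (-α))⁻¹ := by
    simpa using one_le_inv_one_sub_pow (Real.exp_pos _).le
      (Real.exp_lt_one_iff.2 (neg_lt_zero.2 hα)) 0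
  have hP : ∏' n : ℕ, (1 - Real.exp (-α * (n + 1)))⁻¹ = partitionGenFun (Real.exp (-α)) :=
    tprod_congr fun n => by rw [← Real.exp_nat_mul]; push_cast; ring_nf
  rw [Calpha, hP, ← mul_pow, ← sq]
  exact pow_le_pow_left₀ (sq_nonneg _) (le_mul_of_one_le_left (sq_nonneg _) hq1) k

theorem exp_sum_d1_over_all_configs_general (N k : ℕ)
    (α : ℝ) (hα : 0 < α)
    (x : Finset ℤ) (hx : x.card = N) (hxk : numClusters x ≤ k) :
    ∑' y : { y : Finset ℤ // y.card = N },
      Real.exp (-α * dOne N x y.1 hx y.2) ≤ Calpha α ^ k :=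
  calc _ = (∑' y : {y : Finset ℤ // y.card = N},
          ENNReal.ofReal (Real.exp (-α * dOne N x y.1 hx y.2))).toReal := by
        rw [ENNReal.tsum_toReal_eq fun _ => ENNReal.ofReal_ne_top]
        simp only [ENNReal.toReal_ofReal (Real.exp_pos _).le]
    _ ≤ partitionGenFun (Real.exp (-α)) ^ k * partitionGenFun (Real.exp (-α)) ^ k :=
        ENNReal.toReal_le_of_le_ofReal (mul_self_nonneg _)
          (tsum_ofReal_exp_neg_mul_dOne_le hα hx hxk)
    _ ≤ Calpha α ^ k := pow_mul_pow_le_Calpha_pow hα k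

/-- For `N ≥ 1`, `1 ≤ k ≤ N`, `α > 0` and any `x ∈ P_{N,k}(ℤ)` (an `N`-element subset of `ℤ`
with at most `k` clusters), the sum over all `y ∈ P_N(ℤ)` of `e^{-α |x−y|₁}` is at most
`C_α^k`. -/
theorem exp_sum_d1_over_all_configs (N k : ℕ) (hN : 1 ≤ N) (hk : 1 ≤ k) (hkN : k ≤ N)
    (α : ℝ) (hα : 0 < α)
    (x : Finset ℤ) (hx : x.card = N) (hxk : numClusters x ≤ k) :
    ∑' y : { y : Finset ℤ // y.card = N },
      Real.exp (-α * dOne N x y.1 hx y.2) ≤ Calpha α ^ k :=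
  exp_sum_d1_over_all_configs_general N k α hα x hx hxk
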